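/- Suppose the objective F is strictly improved by completing an assignment, i.e. for every assignment X, every i₀ ∈ U, j₀ ∈ M and k₀ ∈ K_{i₀} with x_{i₀j₀}^{k₀} = 0, the assignment X' obtained from X by setting x_{i₀j₀}^{k₀} = 1 satisfies F(X') > F(X). If P1 admits at least one feasible solution, then the optimal value of P2 equals the optimal value of P1: the maximum of F over all P2-feasible assignments equals the maximum of F over all P1-feasible assignments. -/

import Mathlib

open Finset

/-- An assignment is `{0,1}`-valued. -/
def IsAssign {U M K : Type*} (X : U → M → K → ℕ) : Prop :=
  ∀ i j k, X i j k ≤ 1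

/-- The load of server `j` under assignment `X`. -/
def load {U M K : Type*} [Fintype U] (Ki : U → Finset K) (lam : ℝ)
    (X : U → M → K → ℕ) (j : M) : ℝ :=
  lam * ∑ i, ∑ k ∈ Ki i, (X i j k : ℝ)

/-- P1-feasibility. -/
def P1Feas {U M K : Type*} [Fintype U] [Fintype M] (Ki : U → Finset K)
    (lam : ℝ) (c : M → ℝ) (X : U → M → K → ℕ) : Prop :=
  IsAssign X ∧ (∀ j, load Ki lam X j ≤ c j) ∧
    ∀ i, ∀ k ∈ Ki i, ∑ j, X i j k = 1

/-- P2-feasibility. -/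
def P2Feas {U M K : Type*} [Fintype U] [Fintype M] (Ki : U → Finset K)
    (lam : ℝ) (c : M → ℝ) (X : U → M → K → ℕ) : Prop :=
  IsAssign X ∧ (∀ j, load Ki lam X j ≤ c j) ∧
    ∀ i, ∀ k ∈ Ki i, ∑ j, X i j k ≤ 1

/-!
Starting from any P2-feasible `X`, repeatedly give an unserved request `(i₀, k₀)` to some server.
Comparing with a P1-feasible `X₀`, which serves strictly more requests in total, some server `j₀`
serves fewer requests under `X` than under `X₀`, so it has room for one more request of load `λ₀`.
Each step keeps P2-feasibility, strictly increases `F` and decreases the number of unserved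
requests, so it ends at a P1-feasible assignment with a larger objective. Hence every P2 value is
dominated by a P1 value, and as P1-feasible assignments are P2-feasible the two suprema agree
(also when the values are unbounded and both `sSup`s are the junk value `0`).
-/

section Assignment

variable {U M K : Type*}

section AddRequest

variable [DecidableEq U] [DecidableEq M] [DecidableEq K] {X : U → M → K → ℕ}
  {i₀ : U} {j₀ : M} {k₀ : K}

def addRequest (X : U → M → K → ℕ) (i₀ : U) (j₀ : M) (k₀ : K) : U → M → K → ℕ :=
  fun i j k => if i = i₀ ∧ j = j₀ ∧ k = k₀ then 1 else X i j k

lemma IsAssign.addRequest (hX : IsAssign X) : IsAssign (addRequest X i₀ j₀ k₀) := by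
  intro i j k
  unfold _root_.addRequest
  split_ifs
  exacts [le_rfl, hX i j k]

lemma addRequest_apply (h : X i₀ j₀ k₀ = 0) (i : U) (j : M) (k : K) :
    addRequest X i₀ j₀ k₀ i j k = X i j k + if i = i₀ ∧ j = j₀ ∧ k = k₀ then 1 else 0 := by
  unfold addRequest
  split_ifs with hijk
  · obtain ⟨rfl, rfl, rfl⟩ := hijk
    simp [h]
  · rfl

lemma sum_addRequest [Fintype M] (h : X i₀ j₀ k₀ = 0) (i : U) (k : K) :
    ∑ j, addRequest X i₀ j₀ k₀ i j k = ∑ j, X i j k + if i = i₀ ∧ k = k₀ then 1 else 0 := by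
  simp [addRequest_apply h, sum_add_distrib, ite_and]

end AddRequest

variable [Fintype U] {Ki : U → Finset K} {lam : ℝ} {X Y : U → M → K → ℕ}

def served (Ki : U → Finset K) (X : U → M → K → ℕ) (j : M) : ℕ :=
  ∑ i, ∑ k ∈ Ki i, X i j k

lemma load_eq_mul_served (j : M) : load Ki lam X j = lam * served Ki X j := by
  simp [load, served]

lemma served_addRequest [DecidableEq U] [DecidableEq M] [DecidableEq K] {i₀ : U} {j₀ : M}
    {k₀ : K} (hk₀ : k₀ ∈ Ki i₀) (h : X i₀ j₀ k₀ = 0) (j : M) :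
    served Ki (addRequest X i₀ j₀ k₀) j = served Ki X j + if j = j₀ then 1 else 0 := by
  simp [served, addRequest_apply h, sum_add_distrib, ite_and, hk₀]

variable [Fintype M] {c : M → ℝ}

/-- For a P2-feasible `X` each summand is `0` or `1`, so this counts the requests left unserved. -/
def unserved (Ki : U → Finset K) (X : U → M → K → ℕ) : ℕ :=
  ∑ i, ∑ k ∈ Ki i, (1 - ∑ j, X i j k)

lemma P1Feas.p2Feas (hX : P1Feas Ki lam c X) : P2Feas Ki lam c X :=
  ⟨hX.1, hX.2.1, fun i k hk => (hX.2.2 i k hk).le⟩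

lemma P2Feas.p1Feas_of_unserved_eq_zero (hX : P2Feas Ki lam c X) (h : unserved Ki X = 0) :
    P1Feas Ki lam c X := by
  refine ⟨hX.1, hX.2.1, fun i k hk => ?_⟩
  have := sum_eq_zero_iff.mp (sum_eq_zero_iff.mp h i (mem_univ i)) k hk
  have := hX.2.2 i k hk
  omega

lemma sum_served (Ki : U → Finset K) (X : U → M → K → ℕ) :
    ∑ j, served Ki X j = ∑ i, ∑ k ∈ Ki i, ∑ j, X i j k := by
  unfold served
  rw [sum_comm]
  exact sum_congr rfl fun i _ => sum_comm

lemma exists_served_lt_served (hle : ∀ i, ∀ k ∈ Ki i, ∑ j, X i j k ≤ ∑ j, Y i j k)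
    {i₀ : U} {k₀ : K} (hk₀ : k₀ ∈ Ki i₀) (hlt : ∑ j, X i₀ j k₀ < ∑ j, Y i₀ j k₀) :
    ∃ j, served Ki X j < served Ki Y j := by
  suffices ∑ j, served Ki X j < ∑ j, served Ki Y j by
    obtain ⟨j, -, hj⟩ := exists_lt_of_sum_lt this
    exact ⟨j, hj⟩
  rw [sum_served, sum_served]
  refine sum_lt_sum (fun i _ => sum_le_sum (hle i)) ⟨i₀, mem_univ i₀, ?_⟩
  exact sum_lt_sum (hle i₀) ⟨k₀, hk₀, hlt⟩

section Completion

variable [DecidableEq U] [DecidableEq M] [DecidableEq K] {i₀ : U} {j₀ : M} {k₀ : K}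

lemma P2Feas.addRequest (hX : P2Feas Ki lam c X) (hk₀ : k₀ ∈ Ki i₀)
    (hunserved : ∑ j, X i₀ j k₀ = 0) (hroom : lam * (served Ki X j₀ + 1) ≤ c j₀) :
    P2Feas Ki lam c (addRequest X i₀ j₀ k₀) := by
  have h : X i₀ j₀ k₀ = 0 := sum_eq_zero_iff.mp hunserved j₀ (mem_univ j₀)
  refine ⟨hX.1.addRequest, fun j => ?_, fun i k hk => ?_⟩
  · rw [load_eq_mul_served, served_addRequest hk₀ h]
    split_ifs with hj
    · subst hj
      exact_mod_cast hroom
    · simpa [load_eq_mul_served] using hX.2.1 j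
  · rw [sum_addRequest h]
    split_ifs with hik
    · obtain ⟨rfl, rfl⟩ := hik
      omega
    · simpa using hX.2.2 i k hk

lemma unserved_addRequest_lt (hk₀ : k₀ ∈ Ki i₀) (hunserved : ∑ j, X i₀ j k₀ = 0) :
    unserved Ki (addRequest X i₀ j₀ k₀) < unserved Ki X := by
  have h : X i₀ j₀ k₀ = 0 := sum_eq_zero_iff.mp hunserved j₀ (mem_univ j₀)
  have hle : ∀ i, ∀ k ∈ Ki i, 1 - ∑ j, addRequest X i₀ j₀ k₀ i j k ≤ 1 - ∑ j, X i j k :=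
    fun i k _ => by rw [sum_addRequest h]; omega
  refine sum_lt_sum (fun i _ => sum_le_sum (hle i)) ⟨i₀, mem_univ i₀, ?_⟩
  refine sum_lt_sum (hle i₀) ⟨k₀, hk₀, ?_⟩
  rw [sum_addRequest h, hunserved]
  simp

theorem exists_p1Feas_le_of_p2Feas (hlam : 0 ≤ lam) (F : (U → M → K → ℕ) → ℝ)
    (himp : ∀ X, IsAssign X → ∀ i₀ j₀ k₀, k₀ ∈ Ki i₀ → X i₀ j₀ k₀ = 0 →
      F X < F (addRequest X i₀ j₀ k₀))
    {X₀ : U → M → K → ℕ} (hX₀ : P1Feas Ki lam c X₀) (hX : P2Feas Ki lam c X) :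
    ∃ Y, P1Feas Ki lam c Y ∧ F X ≤ F Y := by
  induction hn : unserved Ki X using Nat.strong_induction_on generalizing X with
  | _ n ih =>
    obtain rfl | hn0 := eq_or_ne n 0
    · exact ⟨X, hX.p1Feas_of_unserved_eq_zero hn, le_rfl⟩
    obtain ⟨i₀, -, hi₀⟩ := exists_ne_zero_of_sum_ne_zero (hn ▸ hn0)
    obtain ⟨k₀, hk₀, hik₀⟩ := exists_ne_zero_of_sum_ne_zero hi₀
    have hunserved : ∑ j, X i₀ j k₀ = 0 := by omega
    obtain ⟨j₀, hj₀⟩ : ∃ j, served Ki X j < served Ki X₀ j :=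
      exists_served_lt_served (fun i k hk => (hX.2.2 i k hk).trans_eq (hX₀.2.2 i k hk).symm) hk₀
        (by rw [hunserved, hX₀.2.2 i₀ k₀ hk₀]; exact one_pos)
    have hroom : lam * (served Ki X j₀ + 1) ≤ c j₀ := calc
      lam * (served Ki X j₀ + 1) ≤ lam * served Ki X₀ j₀ := by
        gcongr
        exact_mod_cast hj₀
      _ = load Ki lam X₀ j₀ := (load_eq_mul_served j₀).symm
      _ ≤ c j₀ := hX₀.2.1 j₀
    obtain ⟨Y, hY, hFY⟩ := ih _ (hn ▸ unserved_addRequest_lt hk₀ hunserved)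
      (hX.addRequest hk₀ hunserved hroom) rfl
    have h : X i₀ j₀ k₀ = 0 := sum_eq_zero_iff.mp hunserved j₀ (mem_univ j₀)
    exact ⟨Y, hY, (himp X hX.1 i₀ j₀ k₀ hk₀ h).le.trans hFY⟩

end Completion

end Assignment

theorem P2_value_eq_P1_value_general
    {U M K : Type*} [Fintype U] [Fintype M]
    [DecidableEq U] [DecidableEq M] [DecidableEq K]
    (Ki : U → Finset K) (lam : ℝ) (hlam : 0 < lam) (c : M → ℝ)
    (F : (U → M → K → ℕ) → ℝ)
    (himp : ∀ (X : U → M → K → ℕ), IsAssign X →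
      ∀ i₀ j₀ k₀, k₀ ∈ Ki i₀ → X i₀ j₀ k₀ = 0 →
        F (fun i j k => if i = i₀ ∧ j = j₀ ∧ k = k₀ then 1 else X i j k) > F X)
    (hfeas : ∃ X, P1Feas Ki lam c X) :
    sSup {y : ℝ | ∃ X, P2Feas Ki lam c X ∧ F X = y} =
      sSup {y : ℝ | ∃ X, P1Feas Ki lam c X ∧ F X = y} := by
  obtain ⟨X₀, hX₀⟩ := hfeas
  refine csSup_eq_csSup_of_forall_exists_le ?_ ?_
  · rintro _ ⟨X, hX, rfl⟩
    obtain ⟨Y, hY, hXY⟩ := exists_p1Feas_le_of_p2Feas hlam.le F himp hX₀ hX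
    exact ⟨F Y, ⟨Y, hY, rfl⟩, hXY⟩
  · rintro _ ⟨X, hX, rfl⟩
    exact ⟨F X, ⟨X, hX.p2Feas, rfl⟩, le_rfl⟩

/-- under the strict-improvement hypothesis, if P1 is feasible then
the optimal value of P2 equals the optimal value of P1. -/
theorem P2_value_eq_P1_value
    {U M K : Type*} [Fintype U] [Fintype M] [Fintype K]
    [DecidableEq U] [DecidableEq M] [DecidableEq K]
    (Ki : U → Finset K) (lam : ℝ) (hlam : 0 < lam) (c : M → ℝ)
    (F : (U → M → K → ℕ) → ℝ)
    (himp : ∀ (X : U → M → K → ℕ), IsAssign X →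
      ∀ i₀ j₀ k₀, k₀ ∈ Ki i₀ → X i₀ j₀ k₀ = 0 →
        F (fun i j k => if i = i₀ ∧ j = j₀ ∧ k = k₀ then 1 else X i j k) > F X)
    (hfeas : ∃ X, P1Feas Ki lam c X) :
    sSup {y : ℝ | ∃ X, P2Feas Ki lam c X ∧ F X = y} =
      sSup {y : ℝ | ∃ X, P1Feas Ki lam c X ∧ F X = y} :=
  P2_value_eq_P1_value_general Ki lam hlam c F himp hfeas
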